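/- arXiv:2012.03005 — 2 statements merged into one kernel-verified Lean document; each statement's English description precedes it below -/
import Mathlib

section
/- Let K, C, S, A, t, Θ, Θ* be real numbers such that 0 ≤ 2K − 1 ≤ C, t ≥ 0, C·A ≤ (2K − 1)·S, Θ ≥ S − A + t, and Θ* ≤ S + t. Then C·Θ ≥ (C − 2K + 1)·Θ*. -/
/-- Arithmetic core of Theorem 2 (case 1): the online caching objective `Θ`
satisfies `C·Θ ≥ (C − 2K + 1)·Θ*`, i.e., the approximation ratio
`Θ/Θ* ≥ 1 − (2K−1)/C`. -/
theorem online_caching_ratio_case1 (K C S A t Θ Θstar : ℝ)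
    (h0 : 0 ≤ 2 * K - 1) (h1 : 2 * K - 1 ≤ C) (ht : 0 ≤ t)
    (hA : C * A ≤ (2 * K - 1) * S) (hΘ : Θ ≥ S - A + t) (hΘs : Θstar ≤ S + t) :
    C * Θ ≥ (C - 2 * K + 1) * Θstar := by
  nlinarith [mul_nonneg ht (sub_nonneg.2 h1)]
end

section
/- Let K ≥ 1 and C be natural numbers with C ≤ 2K − 1. Then the number of tuples (x_1, ..., x_K) of natural numbers satisfying x_1 + 2·x_2 + ... + K·x_K = C is at most K!. -/
open Finset

lemma prod_b_eq_factorial (K : ℕ) (hK : 1 ≤ K) :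
    (∏ i ∈ range K, (if i = 0 then 1 else K - i + 1)) = Nat.factorial K := by
  rw [← Finset.prod_range_add_one_eq_factorial]
  apply Finset.prod_nbij' (fun k => if k = 0 then 0 else K - k)
    (fun k => if k = 0 then 0 else K - k) <;>
    intro a ha <;> simp only [mem_range] at * <;> split_ifs <;> omega

/-- Property 3 (combinatorial bound): for `C ≤ 2K − 1`, the number of cache
partitions `(x_1, ..., x_K)` with `x_1 + 2·x_2 + ... + K·x_K = C` is at most
`K!`. -/
theorem online_cache_partition_count_le (K C : ℕ) (hK : 1 ≤ K) (hC : C ≤ 2 * K - 1) :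
    {x : Fin K → ℕ | ∑ k, (k.val + 1) * x k = C}.ncard ≤ Nat.factorial K := by
  classical
  set S := {x : Fin K → ℕ | ∑ k, (k.val + 1) * x k = C} with hS
  set b : Fin K → ℕ := fun k => if k.val = 0 then 1 else K - k.val + 1 with hb
  have hbpos : ∀ k : Fin K, 0 < b k := by
    intro k; simp only [hb]; split <;> omega
  have key : ∀ x ∈ S, ∀ k : Fin K, x k < b k ∨ k.val = 0 := by
    intro x hx k
    rcases eq_or_ne k.val 0 with h0 | h0
    · right; exact h0
    · left
      have hle : (k.val + 1) * x k ≤ C := by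
        rw [← hx]
        exact Finset.single_le_sum (f := fun i : Fin K => (i.val + 1) * x i)
          (fun i _ => Nat.zero_le _) (Finset.mem_univ k)
      obtain ⟨d, hd⟩ : ∃ d, K = (k.val + 1) + d := ⟨K - (k.val + 1), by omega⟩
      have hbk : b k = d + 2 := by simp only [hb, if_neg h0]; omega
      have h2K : 2 * K ≤ (k.val + 1) * (d + 2) := by nlinarith [Nat.one_le_iff_ne_zero.mpr h0]
      have hlt : (k.val + 1) * x k < (k.val + 1) * (d + 2) := by omega
      rw [hbk]
      exact Nat.lt_of_mul_lt_mul_left hlt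
  -- injection from S into Π k, Fin (b k)
  have hinj : ∃ f : S → (∀ k : Fin K, Fin (b k)), Function.Injective f := by
    refine ⟨fun x k => ⟨if k.val = 0 then 0 else x.1 k, ?_⟩, ?_⟩
    · rcases eq_or_ne k.val 0 with h0 | h0
      · simp [h0, hbpos k]
      · simp only [if_neg h0]
        rcases key x.1 x.2 k with h | h
        · exact h
        · exact absurd h h0
    · intro x y hxy
      have hco : ∀ k : Fin K, k.val ≠ 0 → x.1 k = y.1 k := by
        intro k hk
        have := congrFun hxy k
        simpa [if_neg hk, Fin.ext_iff] using this
      ext k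
      rcases eq_or_ne k.val 0 with h0 | h0
      · have hx := x.2; have hy := y.2
        simp only [hS, Set.mem_setOf_eq] at hx hy
        have hxs := Finset.add_sum_erase Finset.univ (fun j : Fin K => (j.val + 1) * x.1 j) (Finset.mem_univ k)
        have hys := Finset.add_sum_erase Finset.univ (fun j : Fin K => (j.val + 1) * y.1 j) (Finset.mem_univ k)
        have hsum_eq : ∑ j ∈ Finset.univ.erase k, (j.val + 1) * x.1 j
            = ∑ j ∈ Finset.univ.erase k, (j.val + 1) * y.1 j := by
          apply Finset.sum_congr rfl
          intro j hj
          have hjk : j ≠ k := Finset.ne_of_mem_erase hj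
          have hj0 : j.val ≠ 0 := fun h => hjk (Fin.ext (h.trans h0.symm))
          rw [hco j hj0]
        simp only [h0] at hxs hys
        omega
      · exact hco k h0
  obtain ⟨f, hf⟩ := hinj
  have h1 : S.ncard = Nat.card S := (Nat.card_coe_set_eq S).symm
  have h2 : Nat.card S ≤ Nat.card (∀ k : Fin K, Fin (b k)) :=
    Nat.card_le_card_of_injective f hf
  have h3 : Nat.card (∀ k : Fin K, Fin (b k)) = ∏ k : Fin K, b k := by
    simp [Nat.card_eq_fintype_card]
  have h4 : (∏ k : Fin K, b k) = Nat.factorial K := by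
    rw [hb, Fin.prod_univ_eq_prod_range (fun i => if i = 0 then 1 else K - i + 1)]
    · exact prod_b_eq_factorial K hK
  omega
end
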